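/- arXiv:2306.06114 — 7 statements merged into one kernel-verified Lean document; each statement's English description precedes it below -/
import Mathlib

section
/- Let G be a representable ℓ-group (a subdirect product of linearly ordered groups) that is 2-divisible, and let u be a central strong unit of G. Define on M = {x ∈ G : 0 ≤ x ≤ u} the map r(x) = (x - u)/2 + u. Then r(x) ⊙ r(x) = x for every x ∈ M, where a ⊙ b := (a - u + b) ∨ 0, and moreover if y ∈ M satisfies y ⊙ y ≤ x then y ≤ r(x). -/
/-- Let `G` be a representable ℓ-group (given by a subdirect embedding `f` into a product
of linearly ordered groups), `2`-divisible (via a halving function `half`), with central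
strong unit `u`.  On `M = [0,u]`, with `a ⊙ b = (a - u + b) ⊔ 0`, the map
`r x = (x - u)/2 + u` satisfies `r x ⊙ r x = x` and `y ⊙ y ≤ x → y ≤ r x`. -/
theorem representable_half_is_square_root {G : Type} [Lattice G] [AddGroup G]
    [CovariantClass G G (· + ·) (· ≤ ·)]
    [CovariantClass G G (Function.swap (· + ·)) (· ≤ ·)]
    -- representability: subdirect embedding into a product of linearly ordered groups
    (ι : Type) (L : ι → Type) [∀ i, AddGroup (L i)] [∀ i, LinearOrder (L i)]
    [∀ i, CovariantClass (L i) (L i) (· + ·) (· ≤ ·)]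
    [∀ i, CovariantClass (L i) (L i) (Function.swap (· + ·)) (· ≤ ·)]
    (f : G → ∀ i, L i)
    (hadd : ∀ x y : G, f (x + y) = f x + f y)
    (hsup : ∀ x y : G, f (x ⊔ y) = f x ⊔ f y)
    (hinj : Function.Injective f)
    (hsur : ∀ i, Function.Surjective fun g => f g i)
    -- 2-divisibility
    (half : G → G) (hhalf : ∀ g : G, half g + half g = g)
    -- central strong unit
    (u : G) (hu0 : 0 ≤ u) (hsu : ∀ g : G, ∃ n : ℕ, 1 ≤ n ∧ g ≤ n • u)
    (hcen : ∀ g : G, u + g = g + u) :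
    ∀ x : G, 0 ≤ x → x ≤ u →
      (((half (x - u) + u) - u + (half (x - u) + u)) ⊔ 0 = x ∧
        ∀ y : G, 0 ≤ y → y ≤ u → ((y - u + y) ⊔ 0) ≤ x → y ≤ half (x - u) + u) := by
  intro x hx0 hxu
  -- f reflects order
  have key : ∀ a b : G, f a ≤ f b → a ≤ b := by
    intro a b hab
    have : a ⊔ b = b := hinj (by rw [hsup]; exact sup_eq_right.mpr hab)
    exact sup_eq_right.mp this
  have hmono : ∀ a b : G, a ≤ b → f a ≤ f b := by
    intro a b hle
    rw [← sup_eq_right.mpr hle, hsup]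
    exact le_sup_left
  -- f preserves 0, neg, sub
  have h0 : f 0 = 0 := by
    have h' := hadd 0 0
    rw [add_zero] at h'
    exact left_eq_add.mp h'
  have hneg : ∀ g : G, f (-g) = -f g := by
    intro g
    exact eq_neg_of_add_eq_zero_right (by rw [← hadd, add_neg_cancel, h0])
  have hsub : ∀ a b : G, f (a - b) = f a - f b := by
    intro a b
    rw [sub_eq_add_neg, hadd, hneg, sub_eq_add_neg]
  set h := half (x - u) with hhdef
  have h2 : h + h = x - u := hhalf _
  have hx : x = h + h + u := by
    rw [h2, sub_add_cancel]
  have e1 : (h + u) - u + (h + u) = x := by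
    rw [add_sub_cancel_right, ← add_assoc, h2, sub_add_cancel]
  refine ⟨by rw [e1]; exact sup_eq_left.mpr hx0, ?_⟩
  intro y hy0 hyu hle
  have hle' : y - u + y ≤ x := le_trans le_sup_left hle
  apply key
  intro i
  -- centrality of f u i in L i
  have hUc : ∀ c : L i, f u i + c = c + f u i := by
    intro c
    obtain ⟨g, hg⟩ := hsur i c
    have heq : f (u + g) = f (g + u) := by rw [hcen g]
    rw [hadd, hadd] at heq
    have := congrFun heq i
    simpa [hg] using this
  set a := f y i with ha
  set b := f h i with hb
  set U := f u i with hU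
  -- main inequality componentwise
  have hcomp : a + -U + a ≤ b + b + U := by
    have h1 : f (y - u + y) ≤ f (h + h + u) := by rw [← hx]; exact hmono _ _ hle'
    have h2' := h1 i
    simp only [hadd, hsub, Pi.add_apply, Pi.sub_apply] at h2'
    simpa [sub_eq_add_neg] using h2'
  have hUneg : ∀ c : L i, -U + c = c + -U := by
    intro c
    have hc : AddCommute U c := hUc c
    exact hc.neg_left
  have haa : a + a ≤ b + b + U + U := by
    have hstep := add_le_add hcomp (le_refl U)
    have e : a + -U + a + U = a + a := by
      rw [add_assoc a (-U) a, hUneg a, ← add_assoc, add_assoc (a + a), neg_add_cancel, add_zero]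
    rwa [e] at hstep
  by_contra hcon
  push_neg at hcon
  have hbU : f (h + u) i = b + U := by rw [hadd]; rfl
  rw [hbU] at hcon
  -- hcon : b + U < a
  have e2 : (b + U) + (b + U) = b + b + U + U := by
    rw [add_assoc b U (b + U), ← add_assoc U b U, hUc b, ← add_assoc b (b + U) U,
      ← add_assoc b b U]
  have s1 : (b + U) + (b + U) < a + (b + U) :=
    lt_of_le_of_ne (add_le_add hcon.le (le_refl (b + U))) (fun heq => hcon.ne (add_right_cancel heq))
  have s2 : a + (b + U) ≤ a + a := add_le_add (le_refl a) hcon.le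
  have hlt : b + b + U + U < a + a := by rw [← e2]; exact lt_of_lt_of_le s1 s2
  exact absurd haa (not_le.mpr hlt)
end

section
/- Let M be a pseudo MV-algebra with square root r and set w = r(0)⁻ ⊙ r(0)⁻. A normal ideal I of M is a strict square ideal (i.e., the quotient M/I admits a strict square root) if and only if w ∈ I. Consequently, any normal ideal containing a strict square ideal is a strict square ideal, and the intersection of any family of strict square ideals is a strict square ideal. -/
/-- A pseudo MV-algebra `(M; ⊕, ⁻, ~, 0, 1)`: `+` plays the role of `⊕`, `lneg` of `⁻`
and `rneg` of `~`; the product is `x ⊙ y = (y⁻ ⊕ x⁻)~`. -/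
class PMV (M : Type) extends Add M, Zero M, One M where
  lneg : M → M
  rneg : M → M
  add_assoc' : ∀ x y z : M, x + y + z = x + (y + z)
  add_zero' : ∀ x : M, x + 0 = x
  zero_add' : ∀ x : M, 0 + x = x
  add_one' : ∀ x : M, x + 1 = 1
  one_add' : ∀ x : M, 1 + x = 1
  lneg_one : lneg 1 = 0
  rneg_one : rneg 1 = 0
  a5 : ∀ x y : M, rneg (lneg x + lneg y) = lneg (rneg x + rneg y)
  a6a : ∀ x y : M, x + rneg (lneg y + lneg (rneg x)) = y + rneg (lneg x + lneg (rneg y))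
  a6b : ∀ x y : M, x + rneg (lneg y + lneg (rneg x)) = rneg (lneg (lneg y) + lneg x) + y
  a6c : ∀ x y : M, x + rneg (lneg y + lneg (rneg x)) = rneg (lneg (lneg x) + lneg y) + x
  a7 : ∀ x y : M, rneg (lneg (lneg x + y) + lneg x) = rneg (lneg y + lneg (x + rneg y))
  a8a : ∀ x : M, rneg (lneg x) = x
  a8b : ∀ x : M, lneg (rneg x) = x

namespace PMV

variable {M : Type} [PMV M]

/-- `x ⊙ y = (y⁻ ⊕ x⁻)~`. -/
def mul (x y : M) : M := rneg (lneg y + lneg x)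

/-- The lattice order of a pseudo MV-algebra: `x ≤ y ↔ x⁻ ⊕ y = 1`. -/
def le (x y : M) : Prop := lneg x + y = 1

/-- `x ∨ y = x ⊕ (x~ ⊙ y)`. -/
def sup (x y : M) : M := x + mul (rneg x) y

/-- `x ∧ y = x ⊙ (x⁻ ⊕ y)`. -/
def inf (x y : M) : M := mul x (lneg x + y)

/-- The distance `d(x,y) = (x ⊙ y⁻) ⊕ (y ⊙ x⁻)`; `x/I = y/I` in `M/I` iff `d(x,y) ∈ I`. -/
def dist (x y : M) : M := mul x (lneg y) + mul y (lneg x)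

/-- An ideal of a pseudo MV-algebra. -/
def IsIdeal (I : Set M) : Prop :=
  (0 : M) ∈ I ∧ (∀ x ∈ I, ∀ y ∈ I, x + y ∈ I) ∧ ∀ x y : M, le x y → y ∈ I → x ∈ I

/-- A normal ideal: `x ⊕ I = I ⊕ x` for every `x`. -/
def IsNormal (I : Set M) : Prop :=
  ∀ x : M, {z | ∃ i ∈ I, z = x + i} = {z | ∃ i ∈ I, z = i + x}

/-- A square root on `M`: `r(x) ⊙ r(x) = x` and `y ⊙ y ≤ x → y ≤ r(x)`. -/
def IsSquareRoot (r : M → M) : Prop :=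
  (∀ x : M, mul (r x) (r x) = x) ∧ ∀ x y : M, le (mul y y) x → le y (r x)

end PMV

section Aux

namespace PMV

variable {M : Type} [PMV M]

lemma lneg_zero' : lneg (0 : M) = 1 := by rw [← rneg_one, a8b]

lemma eq_one_of_rneg_eq_zero {a : M} (h : rneg a = 0) : a = 1 := by
  have h2 := congrArg lneg h
  rwa [a8b, lneg_zero'] at h2

lemma add_rneg' (x : M) : x + rneg x = 1 := by
  have h := a6a x (1 : M)
  rw [one_add'] at h
  rwa [lneg_one, zero_add', a8b] at h

lemma lneg_add' (a : M) : lneg a + a = 1 := by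
  have h := a6b (1 : M) a
  rw [one_add'] at h
  rw [lneg_one, add_zero', a8a] at h
  exact h.symm

/-- antitone: `x ≤ y → y⁻ ≤ x⁻`. -/
lemma antitone' {x y : M} (h : lneg x + y = 1) : lneg (lneg y) + lneg x = 1 := by
  have h7 := a7 x y
  rw [h, lneg_one, zero_add', a8a] at h7
  have h8 := congrArg lneg h7
  rw [a8b] at h8
  rw [h8, ← add_assoc', lneg_add', one_add']

/-- `y ⊕ x~ = 1 → x⁻ ⊕ y = 1`. -/
lemma le_of_le' {x y : M} (h : y + rneg x = 1) : lneg x + y = 1 := by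
  have h7 := a7 y x
  rw [h, lneg_one, add_zero', a8a] at h7
  have h8 := congrArg lneg h7.symm
  rw [a8b] at h8
  rw [h8, add_assoc', lneg_add', add_one']

/-- if `x ≤ z` then `z = (z ⊙ x⁻) ⊕ x`. -/
lemma decompR {x z : M} (h : lneg x + z = 1) : z = mul z (lneg x) + x := by
  have h6 := a6b z x
  rw [a8b, h, rneg_one, add_zero'] at h6
  exact h6

/-- if `x ≤ z` then `z = x ⊕ (z~ ⊙ x)~`-ish: `z = x ⊕ (z⁻ ⊕ x)~`. -/
lemma decompL {x z : M} (h : lneg x + z = 1) : z = x + rneg (lneg z + x) := by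
  have h6 := a6a x z
  rw [a8b, a8b, h, rneg_one, add_zero'] at h6
  exact h6.symm

/-- `(k ⊕ x) ⊙ x⁻ ≤ k`. -/
lemma mulR_le {k x : M} : lneg (mul (k + x) (lneg x)) + k = 1 := by
  have h7 := a7 k (lneg x)
  rw [a8a] at h7
  have h8 : mul (k + x) (lneg x) = rneg (lneg (lneg k + lneg x) + lneg k) := h7.symm
  have h9 := congrArg lneg h8
  rw [a8b] at h9
  rw [h9, add_assoc', lneg_add', add_one']

/-- `(x⊕k)⁻ ⊕ x)~ ≤ k`. -/
lemma rnegL_le {k x : M} : lneg (rneg (lneg (x + k) + x)) + k = 1 := by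
  rw [a8b, add_assoc', lneg_add']

end PMV

open PMV

/-- key computation: `d(r 0, (r 0)⁻) = (r 0)⁻ ⊙ (r 0)⁻`. -/
lemma dist_eq_w {M : Type} [PMV M] {r : M → M} (hr : PMV.IsSquareRoot r) :
    PMV.dist (r 0) (PMV.lneg (r 0)) = PMV.mul (PMV.lneg (r 0)) (PMV.lneg (r 0)) := by
  have h0 : mul (r 0) (r 0) = 0 := hr.1 0
  have h1 : lneg (r 0) + lneg (r 0) = 1 := eq_one_of_rneg_eq_zero h0
  have h2 : lneg (lneg (lneg (r 0))) + lneg (r 0) = 1 := antitone' h1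
  show mul (r 0) (lneg (lneg (r 0))) + mul (lneg (r 0)) (lneg (r 0)) = _
  have h3 : mul (r 0) (lneg (lneg (r 0))) = (0 : M) := by
    show rneg (lneg (lneg (lneg (r 0))) + lneg (r 0)) = 0
    rw [h2, rneg_one]
  rw [h3, zero_add']

/-- intersection of a nonempty family of normal ideals is a normal ideal. -/
lemma sInter_normal {M : Type} [PMV M] (S : Set (Set M)) (hS : S.Nonempty)
    (h : ∀ J ∈ S, PMV.IsIdeal J ∧ PMV.IsNormal J) :
    PMV.IsIdeal (⋂₀ S) ∧ PMV.IsNormal (⋂₀ S) := by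
  constructor
  · refine ⟨?_, ?_, ?_⟩
    · intro J hJ; exact (h J hJ).1.1
    · intro x hx y hy J hJ; exact (h J hJ).1.2.1 x (hx J hJ) y (hy J hJ)
    · intro x y hxy hy J hJ; exact (h J hJ).1.2.2 x y hxy (hy J hJ)
  · intro x
    ext z
    simp only [Set.mem_setOf_eq]
    constructor
    · rintro ⟨i, hi, rfl⟩
      refine ⟨mul (x + i) (lneg x), ?_, ?_⟩
      · intro J hJ
        -- x + i ∈ {z | ∃ i ∈ J, z = x + i} = {z | ∃ i ∈ J, z = i + x}
        have hmem : (x + i) ∈ {z | ∃ j ∈ J, z = x + j} := ⟨i, hi J hJ, rfl⟩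
        rw [(h J hJ).2 x] at hmem
        obtain ⟨k, hk, hzk⟩ := hmem
        have hle : PMV.le (mul (x + i) (lneg x)) k := by
          show lneg (mul (x + i) (lneg x)) + k = 1
          rw [hzk]; exact mulR_le
        exact (h J hJ).1.2.2 _ k hle hk
      · have hle : lneg x + (x + i) = 1 := by
          rw [← add_assoc', lneg_add', one_add']
        exact decompR hle
    · rintro ⟨i, hi, rfl⟩
      refine ⟨rneg (lneg (i + x) + x), ?_, ?_⟩
      · intro J hJ
        have hmem : (i + x) ∈ {z | ∃ j ∈ J, z = j + x} := ⟨i, hi J hJ, rfl⟩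
        rw [← (h J hJ).2 x] at hmem
        obtain ⟨k, hk, hzk⟩ := hmem
        have hle : PMV.le (rneg (lneg (i + x) + x)) k := by
          show lneg (rneg (lneg (i + x) + x)) + k = 1
          rw [hzk]; exact rnegL_le
        exact (h J hJ).1.2.2 _ k hle hk
      · have hle : lneg x + (i + x) = 1 := by
          apply le_of_le'
          rw [add_assoc', add_rneg', add_one']
        exact decompL hle

end Aux

/-- `I` is a strict square ideal for the square root `r`: `I` is a normal ideal and the
induced square root on `M/I` is strict, i.e. `r(0)/I = (r(0)/I)⁻`, which (via the quotient
congruence) means `d(r(0), r(0)⁻) ∈ I`. -/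
def IsStrictSquareIdeal {M : Type} [PMV M] (r : M → M) (I : Set M) : Prop :=
  PMV.IsIdeal I ∧ PMV.IsNormal I ∧ PMV.dist (r 0) (PMV.lneg (r 0)) ∈ I

/-- Let `M` be a pseudo MV-algebra with square root `r` and `w = r(0)⁻ ⊙ r(0)⁻`.
A normal ideal `I` is a strict square ideal iff `w ∈ I`; any normal ideal containing a
strict square ideal is a strict square ideal; and the intersection of a (nonempty) family
of strict square ideals is a strict square ideal. -/
theorem strict_square_ideal_iff {M : Type} [PMV M] (r : M → M)
    (hr : PMV.IsSquareRoot r) (I : Set M) (hI : PMV.IsIdeal I) (hIn : PMV.IsNormal I) :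
    (IsStrictSquareIdeal r I ↔ PMV.mul (PMV.lneg (r 0)) (PMV.lneg (r 0)) ∈ I) ∧
    (∀ J K : Set M, PMV.IsIdeal K → PMV.IsNormal K → IsStrictSquareIdeal r J →
      J ⊆ K → IsStrictSquareIdeal r K) ∧
    (∀ S : Set (Set M), S.Nonempty → (∀ J ∈ S, IsStrictSquareIdeal r J) →
      IsStrictSquareIdeal r (⋂₀ S)) := by
  have key := dist_eq_w hr
  refine ⟨?_, ?_, ?_⟩
  · constructor
    · rintro ⟨_, _, hd⟩
      rwa [key] at hd
    · intro hw
      exact ⟨hI, hIn, by rw [key]; exact hw⟩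
  · intro J K hK hKn hJ hsub
    exact ⟨hK, hKn, hsub hJ.2.2⟩
  · intro S hS hSJ
    have h := sInter_normal S hS (fun J hJ => ⟨(hSJ J hJ).1, (hSJ J hJ).2.1⟩)
    refine ⟨h.1, h.2, ?_⟩
    intro J hJ
    exact (hSJ J hJ).2.2
end

section
/- Let M = Γ(G,u) be a pseudo MV-algebra arising from a unital ℓ-group (G,u), and suppose the square root of 0 exists, i.e., there is an element a ∈ M with a ⊙ a = 0 and y ⊙ y ≤ 0 ⟹ y ≤ a for all y ∈ M. Then √0 = max{y ∈ M : 2y ≤ u}, and √0 = max{x ∧ x⁻ : x ∈ M}. -/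
private lemma key_iff {G : Type} [Lattice G] [AddGroup G]
    [CovariantClass G G (· + ·) (· ≤ ·)]
    [CovariantClass G G (Function.swap (· + ·)) (· ≤ ·)]
    (u y : G) : y - u + y ≤ 0 ↔ y + y ≤ u := by
  rw [← sub_nonpos (a := y + y) (b := u)]
  constructor
  · intro h
    have h1 : y - u ≤ -y := by
      have := add_le_add_left h (-y)
      simpa using this
    have h2 : y + (y - u) ≤ y + -y := add_le_add_right h1 y
    calc y + y - u = y + (y - u) := by rw [add_sub_assoc]
      _ ≤ y + -y := h2
      _ = 0 := add_neg_cancel y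
  · intro h
    have h0 : y + (y - u) ≤ 0 := by rwa [← add_sub_assoc]
    have h1 : y - u ≤ -y := by
      have := add_le_add_right h0 (-y)
      simpa [← add_assoc] using this
    have := add_le_add_left h1 y
    simpa using this

/-- Let `M = Γ(G,u)` be the pseudo MV-algebra of a unital ℓ-group `(G,u)`, with
`x ⊙ y = (x - u + y) ⊔ 0` and `x⁻ = u - x`.  If `a` is a square root of `0`
(`a ⊙ a = 0` and `y ⊙ y ≤ 0 → y ≤ a` on `M = [0,u]`), then
`a = max {y ∈ M : 2y ≤ u}` and `a = max {x ∧ x⁻ : x ∈ M}`. -/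
theorem sqrt_zero_characterizations {G : Type} [Lattice G] [AddGroup G]
    [CovariantClass G G (· + ·) (· ≤ ·)]
    [CovariantClass G G (Function.swap (· + ·)) (· ≤ ·)]
    (u : G) (hu0 : 0 ≤ u) (hsu : ∀ g : G, ∃ n : ℕ, 1 ≤ n ∧ g ≤ n • u)
    (a : G) (ha0 : 0 ≤ a) (hau : a ≤ u)
    (haa : (a - u + a) ⊔ 0 = 0)
    (hmax : ∀ y : G, 0 ≤ y → y ≤ u → ((y - u + y) ⊔ 0) ≤ 0 → y ≤ a) :
    IsGreatest {y : G | (0 ≤ y ∧ y ≤ u) ∧ y + y ≤ u} a ∧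
    IsGreatest {z : G | ∃ x : G, (0 ≤ x ∧ x ≤ u) ∧ z = x ⊓ (u - x)} a := by
  have haa' : a - u + a ≤ 0 := by
    have := le_of_eq haa
    exact le_trans (le_sup_left) this
  have ha2 : a + a ≤ u := (key_iff u a).mp haa'
  have hle : ∀ y : G, 0 ≤ y → y ≤ u → y + y ≤ u → y ≤ a := by
    intro y hy0 hyu hyy
    exact hmax y hy0 hyu (sup_le ((key_iff u y).mpr hyy) le_rfl)
  have haua : a ≤ u - a := le_sub_iff_add_le.mpr ha2
  constructor
  · exact ⟨⟨⟨ha0, hau⟩, ha2⟩, fun y hy => hle y hy.1.1 hy.1.2 hy.2⟩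
  · constructor
    · exact ⟨a, ⟨ha0, hau⟩, (inf_eq_left.mpr haua).symm⟩
    · rintro z ⟨x, ⟨hx0, hxu⟩, rfl⟩
      set y := x ⊓ (u - x) with hy
      have hy0 : 0 ≤ y := le_inf hx0 (sub_nonneg.mpr hxu)
      have hyu : y ≤ u := le_trans inf_le_left hxu
      have hyy : y + y ≤ u := by
        have h1 : y ≤ u - x := inf_le_right
        have h2 : y ≤ x := inf_le_left
        calc y + y ≤ (u - x) + x := add_le_add h1 h2
          _ = u := sub_add_cancel u x
      exact hle y hy0 hyu hyy
end

section
/- Let M = Γ(G,u) be a representable pseudo MV-algebra such that u/2 exists in G. Then √0 exists in M and √0 = u/2. -/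
/-- Let `M = Γ(G,u)` be a representable pseudo MV-algebra (the unital ℓ-group `(G,u)` has
a subdirect embedding into a product of linearly ordered groups) such that `u/2` exists
in `G` (an element `v` with `v + v = u`).  Then `√0` exists in `M` and equals `u/2`:
`v ∈ [0,u]`, `v ⊙ v = 0`, and every `y ∈ [0,u]` with `y ⊙ y ≤ 0` satisfies `y ≤ v`,
where `x ⊙ y = (x - u + y) ⊔ 0`. -/
theorem sqrt_zero_eq_half_unit {G : Type} [Lattice G] [AddGroup G]
    [CovariantClass G G (· + ·) (· ≤ ·)]
    [CovariantClass G G (Function.swap (· + ·)) (· ≤ ·)]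
    (ι : Type) (L : ι → Type) [∀ i, AddGroup (L i)] [∀ i, LinearOrder (L i)]
    [∀ i, CovariantClass (L i) (L i) (· + ·) (· ≤ ·)]
    [∀ i, CovariantClass (L i) (L i) (Function.swap (· + ·)) (· ≤ ·)]
    (f : G → ∀ i, L i)
    (hadd : ∀ x y : G, f (x + y) = f x + f y)
    (hsup : ∀ x y : G, f (x ⊔ y) = f x ⊔ f y)
    (hinj : Function.Injective f)
    (hsur : ∀ i, Function.Surjective fun g => f g i)
    (u : G) (hu0 : 0 ≤ u) (hsu : ∀ g : G, ∃ n : ℕ, 1 ≤ n ∧ g ≤ n • u)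
    (v : G) (hv : v + v = u) :
    (0 ≤ v ∧ v ≤ u) ∧ ((v - u + v) ⊔ 0 = 0) ∧
      ∀ y : G, 0 ≤ y → y ≤ u → ((y - u + y) ⊔ 0) ≤ 0 → y ≤ v := by
  -- f preserves 0
  have hf0 : f 0 = 0 := by
    have h := hadd 0 0
    rw [add_zero] at h
    exact (left_eq_add.mp h)
  -- f preserves negation
  have hfneg : ∀ x : G, f (-x) = - f x := by
    intro x
    have h := hadd x (-x)
    rw [add_neg_cancel, hf0] at h
    exact eq_neg_of_add_eq_zero_right h.symm
  -- f is monotone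
  have hmono : ∀ x y : G, x ≤ y → f x ≤ f y := by
    intro x y h
    have h1 : f x ⊔ f y = f y := by rw [← hsup, sup_eq_right.mpr h]
    exact sup_eq_right.mp h1
  -- f reflects order
  have hrefl : ∀ x y : G, f x ≤ f y → x ≤ y := by
    intro x y h
    have h1 : f (x ⊔ y) = f y := by rw [hsup]; exact sup_eq_right.mpr h
    exact sup_eq_right.mp (hinj h1)
  have hfv : ∀ i, f v i + f v i = f u i := by
    intro i
    have h : f v + f v = f u := by rw [← hadd, hv]
    exact congrFun h i
  -- 0 ≤ v
  have hv0 : (0 : G) ≤ v := by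
    apply hrefl
    rw [hf0]
    intro i
    by_contra hneg
    push_neg at hneg
    have h2 : f v i + f v i < 0 + 0 := add_lt_add hneg hneg
    rw [add_zero, hfv i] at h2
    have h3 : (0 : L i) ≤ f u i := by
      have := hmono 0 u hu0; rw [hf0] at this; exact this i
    exact absurd h2 (not_lt.mpr h3)
  -- v ≤ u
  have hvu : v ≤ u := by
    have : v + 0 ≤ v + v := add_le_add_right hv0 v
    rw [add_zero, hv] at this
    exact this
  refine ⟨⟨hv0, hvu⟩, ?_, ?_⟩
  · have hz : v - u + v = 0 := by
      rw [← hv, sub_eq_add_neg, neg_add_rev, add_assoc, add_assoc, neg_add_cancel,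
        add_zero, add_neg_cancel]
    rw [hz, sup_idem]
  · intro y hy0 hyu hsq
    have h1 : y - u + y ≤ 0 := le_trans le_sup_left hsq
    have h2 : ∀ i, f y i - f u i + f y i ≤ 0 := by
      intro i
      have h3 := hmono _ _ h1
      rw [hf0] at h3
      have h4 : f (y - u + y) = f y - f u + f y := by
        rw [hadd, sub_eq_add_neg, hadd, hfneg, ← sub_eq_add_neg]
      rw [h4] at h3
      exact h3 i
    apply hrefl
    intro i
    rcases le_total (f y i) (f v i) with h | h
    · exact h
    · -- f v i ≤ f y i ; show f y i ≤ f v i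
      have hz : f v i - f u i + f v i = 0 := by
        rw [← hfv i, sub_eq_add_neg, neg_add_rev, add_assoc, add_assoc, neg_add_cancel,
          add_zero, add_neg_cancel]
      have h5 : f v i - f u i + f y i ≤ f y i - f u i + f y i :=
        add_le_add_left (sub_le_sub_right h _) _
      have h6 : f v i - f u i + f y i ≤ f v i - f u i + f v i := by
        rw [hz]; exact le_trans h5 (h2 i)
      exact le_of_add_le_add_left h6
end

section
/- Let M = Γ(G,u) be a symmetric representable pseudo MV-algebra with u/2 ∈ G, and let x ∈ M. Then the square root √x exists in M if and only if (x + u)/2 exists in G and lies in M; in that case √x = (x + u)/2, and moreover x/2 ∈ M. -/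
private lemma double_le_double {L : Type} [AddGroup L] [LinearOrder L]
    [CovariantClass L L (· + ·) (· ≤ ·)]
    [CovariantClass L L (Function.swap (· + ·)) (· ≤ ·)]
    {s t : L} (h : s + s ≤ t + t) : s ≤ t := by
  by_contra hc
  push_neg at hc
  have h1 : s + s ≤ t + s := h.trans (add_le_add_right hc.le t)
  have h2 : s ≤ t := by
    have := add_le_add_right h1 (-s)
    simpa [add_assoc] using this
  exact hc.not_ge h2

private lemma neg_comm_of_comm {L : Type} [AddGroup L] {a b : L} (h : a + b = b + a) :
    -a + b = b + -a := by
  have h2 : -a + (b + a) + -a = -a + (a + b) + -a := by rw [h]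
  simpa [add_assoc] using h2

private lemma comm_of_double_central {L : Type} [AddGroup L] [LinearOrder L]
    [CovariantClass L L (· + ·) (· ≤ ·)]
    [CovariantClass L L (Function.swap (· + ·)) (· ≤ ·)]
    {w : L} (hU : ∀ d : L, (w + w) + d = d + (w + w)) (c : L) :
    w + c = c + w := by
  have conj_mono : ∀ a b : L, a ≤ b → -w + a + w ≤ -w + b + w := fun a b hab =>
    add_le_add_left (add_le_add_right hab _) _
  have hcc : -w + (-w + c + w) + w = c := by
    have h1 : c + (w + w) = (w + w) + c := (hU c).symm
    calc -w + (-w + c + w) + w = -w + (-w + (c + (w + w))) := by simp [add_assoc]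
      _ = -w + (-w + ((w + w) + c)) := by rw [h1]
      _ = c := by simp [add_assoc]
  have hkey : -w + c + w = c := by
    rcases le_total c (-w + c + w) with hle | hle
    · have h2 := conj_mono _ _ hle
      rw [hcc] at h2
      exact le_antisymm h2 hle
    · have h2 := conj_mono _ _ hle
      rw [hcc] at h2
      exact le_antisymm hle h2
  have := congrArg (fun z => w + z) hkey
  simpa [add_assoc] using this.symm

/-- `a` is the square root of `x` in the pseudo MV-algebra `Γ(G,u) = [0,u]`,
where `y ⊙ z = (y - u + z) ⊔ 0`. -/
def IsPMVSqrt {G : Type} [Lattice G] [AddGroup G] (u x a : G) : Prop :=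
  (0 ≤ a ∧ a ≤ u) ∧ ((a - u + a) ⊔ 0 = x) ∧
    ∀ y : G, 0 ≤ y → y ≤ u → ((y - u + y) ⊔ 0) ≤ x → y ≤ a

/-- Let `M = Γ(G,u)` be a symmetric (i.e. `u` central) representable pseudo MV-algebra
with `u/2 ∈ G`, and let `x ∈ M`.  Then `√x` exists iff `(x+u)/2` exists in `G` and lies in
`M`; in that case `√x = (x+u)/2`, and moreover `x/2 ∈ M`. -/
theorem sqrt_exists_iff_half_exists {G : Type} [Lattice G] [AddGroup G]
    [CovariantClass G G (· + ·) (· ≤ ·)]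
    [CovariantClass G G (Function.swap (· + ·)) (· ≤ ·)]
    -- representability
    (ι : Type) (L : ι → Type) [∀ i, AddGroup (L i)] [∀ i, LinearOrder (L i)]
    [∀ i, CovariantClass (L i) (L i) (· + ·) (· ≤ ·)]
    [∀ i, CovariantClass (L i) (L i) (Function.swap (· + ·)) (· ≤ ·)]
    (f : G → ∀ i, L i)
    (hadd : ∀ x y : G, f (x + y) = f x + f y)
    (hsup : ∀ x y : G, f (x ⊔ y) = f x ⊔ f y)
    (hinj : Function.Injective f)
    (hsur : ∀ i, Function.Surjective fun g => f g i)
    -- unital, symmetric, u/2 exists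
    (u : G) (hu0 : 0 ≤ u) (hsu : ∀ g : G, ∃ n : ℕ, 1 ≤ n ∧ g ≤ n • u)
    (hsym : ∀ g : G, u + g = g + u)
    (v : G) (hv : v + v = u)
    (x : G) (hx0 : 0 ≤ x) (hxu : x ≤ u) :
    ((∃ a : G, IsPMVSqrt u x a) ↔ ∃ h : G, h + h = x + u ∧ 0 ≤ h ∧ h ≤ u) ∧
    (∀ a h : G, IsPMVSqrt u x a → h + h = x + u → a = h) ∧
    ((∃ a : G, IsPMVSqrt u x a) → ∃ k : G, k + k = x ∧ 0 ≤ k ∧ k ≤ u) := by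
  -- basic facts about f
  have hf0 : f 0 = 0 := by
    have h := hadd 0 0
    rw [add_zero] at h
    exact (add_left_cancel (a := f 0) (by rw [add_zero]; exact h.symm))
  have hneg : ∀ g : G, f (-g) = -(f g) := by
    intro g
    have h : f (-g) + f g = 0 := by rw [← hadd, neg_add_cancel, hf0]
    exact eq_neg_of_add_eq_zero_left h
  have hmono : ∀ a b : G, a ≤ b ↔ f a ≤ f b := by
    intro a b
    constructor
    · intro h
      have : f a ⊔ f b = f b := by rw [← hsup, sup_eq_right.mpr h]
      exact sup_eq_right.mp this
    · intro h
      have : f (a ⊔ b) = f b := by rw [hsup, sup_eq_right.mpr h]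
      exact sup_eq_right.mp (hinj this)
  -- centrality of u componentwise
  have uc : ∀ (i : ι) (c : L i), f u i + c = c + f u i := by
    intro i c
    obtain ⟨g, hg⟩ := hsur i c
    simp only at hg
    rw [← hg]
    calc f u i + f g i = f (u + g) i := (congrFun (hadd u g) i).symm
      _ = f (g + u) i := by rw [hsym g]
      _ = f g i + f u i := congrFun (hadd g u) i
  have nuc : ∀ (i : ι) (c : L i), -(f u i) + c = c + -(f u i) := fun i c =>
    neg_comm_of_comm (uc i c)
  have hvv : ∀ i, f v i + f v i = f u i := by
    intro i
    have := congrFun (hadd v v) i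
    rw [hv] at this
    exact this.symm
  have vc : ∀ (i : ι) (c : L i), f v i + c = c + f v i := by
    intro i c
    exact comm_of_double_central (fun d => by rw [hvv i]; exact uc i d) c
  have nvc : ∀ (i : ι) (c : L i), -(f v i) + c = c + -(f v i) := fun i c =>
    neg_comm_of_comm (vc i c)
  -- componentwise form of the MV product
  have hcomp : ∀ (a : G) (i : ι), f ((a - u + a) ⊔ 0) i = (f a i - f u i + f a i) ⊔ 0 := by
    intro a i
    have h1 : f ((a - u + a) ⊔ 0) = f (a - u + a) ⊔ f 0 := hsup _ _
    have h2 : f (a - u + a) = f (a - u) + f a := hadd _ _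
    have h3 : f (a - u) = f a + f (-u) := by rw [← hadd, sub_eq_add_neg]
    rw [h1, h2, h3, hneg u, hf0]
    simp [sub_eq_add_neg, Pi.sup_apply]
  -- swap lemma: A - U + A = A + A - U
  have hsw : ∀ (a : G) (i : ι), f a i - f u i + f a i = f a i + f a i - f u i := by
    intro a i
    rw [sub_eq_add_neg, sub_eq_add_neg, add_assoc, nuc i (f a i), ← add_assoc]
  have hX0 : ∀ i, (0 : L i) ≤ f x i := by
    intro i
    have h := (hmono 0 x).mp hx0
    rw [hf0] at h
    exact h i
  have hU0 : ∀ i, (0 : L i) ≤ f u i := by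
    intro i
    have h := (hmono 0 u).mp hu0
    rw [hf0] at h
    exact h i
  have hV0 : ∀ i, (0 : L i) ≤ f v i := by
    intro i
    refine double_le_double ?_
    rw [hvv i]
    simpa using hU0 i
  have hv0 : 0 ≤ v := by
    rw [hmono, hf0]
    intro i
    exact hV0 i
  have hvu : v ≤ u := by
    rw [hmono]
    intro i
    rw [← hvv i]
    exact le_add_of_nonneg_right (hV0 i)
  -- key lemma: any square root a satisfies v ≤ a and a + a = x + u
  have key : ∀ a : G, IsPMVSqrt u x a → v ≤ a ∧ a + a = x + u := by
    rintro a ⟨⟨ha0, hau⟩, hsq, hmax⟩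
    have hsqc : ∀ i, (f a i - f u i + f a i) ⊔ 0 = f x i := by
      intro i
      rw [← hcomp a i, hsq]
    have hva : v ≤ a := by
      have h1 : (0 : G) ≤ v ⊔ a := le_trans ha0 le_sup_right
      have h2 : v ⊔ a ≤ u := sup_le hvu hau
      have h3 : ((v ⊔ a) - u + (v ⊔ a)) ⊔ 0 ≤ x := by
        rw [hmono]
        intro i
        rw [hcomp]
        have hsva : f (v ⊔ a) i = f v i ⊔ f a i := by
          rw [hsup]; rfl
        rw [hsva]
        rcases le_total (f v i) (f a i) with hc | hc
        · rw [sup_eq_right.mpr hc, hsqc i]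
        · rw [sup_eq_left.mpr hc]
          have hz : f v i - f u i + f v i = 0 := by
            rw [sub_eq_add_neg, add_assoc, nuc i (f v i), ← add_assoc, hvv i,
              add_neg_cancel]
          rw [hz]
          simpa using hX0 i
      exact le_sup_left.trans (hmax _ h1 h2 h3)
    refine ⟨hva, ?_⟩
    apply hinj
    funext i
    rw [congrFun (hadd a a) i, congrFun (hadd x u) i]
    simp only [Pi.add_apply]
    have hA : f v i ≤ f a i := (hmono v a).mp hva i
    have hUAA : f u i ≤ f a i + f a i := by
      rw [← hvv i]; exact add_le_add hA hA
    have hge : (0 : L i) ≤ f a i - f u i + f a i := by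
      rw [hsw]
      have := add_le_add_right hUAA (-(f u i))
      simpa [sub_eq_add_neg] using this
    have hsqi := hsqc i
    rw [sup_eq_left.mpr hge, hsw] at hsqi
    have := congrArg (fun z => z + f u i) hsqi
    simpa [sub_eq_add_neg, add_assoc] using this
  refine ⟨⟨?_, ?_⟩, ?_, ?_⟩
  · rintro ⟨a, ha⟩
    exact ⟨a, (key a ha).2, ha.1.1, ha.1.2⟩
  · rintro ⟨h, hh, hh0, hhu⟩
    refine ⟨h, ⟨hh0, hhu⟩, ?_, ?_⟩
    · apply hinj
      funext i
      rw [hcomp h i, hsw]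
      have hHH : f h i + f h i = f x i + f u i := by
        have := congrFun (congrArg f hh) i
        rw [hadd h h, hadd x u] at this
        exact this
      rw [hHH]
      have : f x i + f u i - f u i = f x i := by
        simp [sub_eq_add_neg, add_assoc]
      rw [this, sup_eq_left.mpr (hX0 i)]
    · intro y hy0 hyu hyx
      rw [hmono]
      intro i
      have hyx' := (hmono _ _).mp hyx i
      rw [hcomp y i, hsw] at hyx'
      have h1 : f y i + f y i - f u i ≤ f x i := le_trans le_sup_left hyx'
      have h2 : f y i + f y i ≤ f x i + f u i := by
        have := add_le_add_left h1 (f u i)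
        simpa [sub_eq_add_neg, add_assoc] using this
      have hHH : f h i + f h i = f x i + f u i := by
        have := congrFun (congrArg f hh) i
        rw [hadd h h, hadd x u] at this
        exact this
      exact double_le_double (h2.trans_eq hHH.symm)
  · intro a h ha hh
    have haa := (key a ha).2
    apply hinj
    funext i
    have heq : f a i + f a i = f h i + f h i := by
      have := congrFun (congrArg f (haa.trans hh.symm)) i
      rw [hadd a a, hadd h h] at this
      exact this
    exact le_antisymm (double_le_double heq.le) (double_le_double heq.ge)
  · rintro ⟨a, ha⟩
    obtain ⟨hva, haa⟩ := key a ha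
    obtain ⟨⟨ha0, hau⟩, -, -⟩ := ha
    refine ⟨a + -v, ?_, ?_, ?_⟩
    · apply hinj
      funext i
      have hAA : f a i + f a i = f x i + f u i := by
        have := congrFun (congrArg f haa) i
        rw [hadd a a, hadd x u] at this
        exact this
      have h1 : f (a + -v + (a + -v)) i = f a i + -(f v i) + (f a i + -(f v i)) := by
        rw [hadd, hadd, hneg]
        simp
      rw [h1]
      calc f a i + -(f v i) + (f a i + -(f v i))
          = f a i + (-(f v i) + f a i) + -(f v i) := by simp [add_assoc]
        _ = f a i + (f a i + -(f v i)) + -(f v i) := by rw [nvc i (f a i)]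
        _ = f a i + f a i + (-(f v i) + -(f v i)) := by simp [add_assoc]
        _ = f x i + f u i + -(f v i + f v i) := by rw [hAA, neg_add_rev]
        _ = f x i := by rw [hvv i]; simp [add_assoc]
    · have := add_le_add_right hva (-v)
      simpa using this
    · have h1 : a ≤ u + v := hau.trans (le_add_of_nonneg_right hv0)
      have := add_le_add_right h1 (-v)
      simpa [add_assoc] using this
end

section
/- Let M = Γ(G,u) be a symmetric representable pseudo MV-algebra with u/2 ∈ G and let x, y ∈ M be elements whose square roots exist. Then √(x ∨ y) and √(x ∧ y) exist, with √(x ∨ y) = √x ∨ √y and √(x ∧ y) = √x ∧ √y; moreover √(x⁻) exists and equals √x → √0 (where a → b = (u − a + b) ∧ u). -/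
/-- Let `M = Γ(G,u)` be a symmetric representable pseudo MV-algebra with `u/2 ∈ G`,
and let `x, y ∈ M` with square roots `a = √x`, `b = √y`, and `c = √0`.  Then
`√(x ⊔ y) = a ⊔ b`, `√(x ⊓ y) = a ⊓ b`, and `√(x⁻) = √x → √0 = (u - a + c) ⊓ u`
(where `x⁻ = u - x`). -/
theorem sqrt_sup_inf_neg {G : Type} [Lattice G] [AddGroup G]
    [CovariantClass G G (· + ·) (· ≤ ·)]
    [CovariantClass G G (Function.swap (· + ·)) (· ≤ ·)]
    (ι : Type) (L : ι → Type) [∀ i, AddGroup (L i)] [∀ i, LinearOrder (L i)]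
    [∀ i, CovariantClass (L i) (L i) (· + ·) (· ≤ ·)]
    [∀ i, CovariantClass (L i) (L i) (Function.swap (· + ·)) (· ≤ ·)]
    (f : G → ∀ i, L i)
    (hadd : ∀ x y : G, f (x + y) = f x + f y)
    (hsup : ∀ x y : G, f (x ⊔ y) = f x ⊔ f y)
    (hinj : Function.Injective f)
    (hsur : ∀ i, Function.Surjective fun g => f g i)
    (u : G) (hu0 : 0 ≤ u) (hsu : ∀ g : G, ∃ n : ℕ, 1 ≤ n ∧ g ≤ n • u)
    (hsym : ∀ g : G, u + g = g + u)
    (v : G) (hv : v + v = u)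
    (x y : G) (hx : 0 ≤ x ∧ x ≤ u) (hy : 0 ≤ y ∧ y ≤ u)
    (a b c : G) (ha : IsPMVSqrt u x a) (hb : IsPMVSqrt u y b)
    (hc : IsPMVSqrt u 0 c) :
    IsPMVSqrt u (x ⊔ y) (a ⊔ b) ∧
    IsPMVSqrt u (x ⊓ y) (a ⊓ b) ∧
    IsPMVSqrt u (u - x) ((u - a + c) ⊓ u) := by
  classical
  -- basic properties of f
  have f0 : f 0 = 0 := by
    have h := hadd 0 0
    rw [add_zero] at h
    exact (add_eq_left.mp h.symm)
  have fneg : ∀ g : G, f (-g) = - f g := by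
    intro g
    have h := hadd g (-g)
    rw [add_neg_cancel, f0] at h
    exact eq_neg_of_add_eq_zero_right h.symm
  have fmono : ∀ {p q : G}, p ≤ q → f p ≤ f q := by
    intro p q h
    have h1 : f (p ⊔ q) = f q := by rw [sup_eq_right.mpr h]
    rw [hsup] at h1
    calc f p ≤ f p ⊔ f q := le_sup_left
    _ = f q := h1
  have frefl : ∀ {p q : G}, f p ≤ f q → p ≤ q := by
    intro p q h
    have h1 : f (p ⊔ q) = f q := by rw [hsup]; exact sup_eq_right.mpr h
    exact sup_eq_right.mp (hinj h1)
  -- doubling lemmas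
  have dbl_lin : ∀ (i : ι) (p q : L i), p + p = q + q → p = q := by
    intro i p q h
    rcases lt_trichotomy p q with hlt | he | hlt
    · exact absurd h (ne_of_lt (add_lt_add hlt hlt))
    · exact he
    · exact absurd h.symm (ne_of_lt (add_lt_add hlt hlt))
  have dbl_le : ∀ p q : G, p + p ≤ q + q → p ≤ q := by
    intro p q h
    apply frefl
    intro i
    have h' := fmono h
    rw [hadd, hadd] at h'
    have hi : f p i + f p i ≤ f q i + f q i := h' i
    by_contra hlt
    push_neg at hlt
    exact absurd hi (not_le.mpr (add_lt_add hlt hlt))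
  -- commutation lemmas
  have Cu : ∀ g : G, AddCommute u g := fun g => hsym g
  have fuc : ∀ (i : ι) (ℓ : L i), f u i + ℓ = ℓ + f u i := by
    intro i ℓ
    obtain ⟨g, rfl⟩ := hsur i ℓ
    show f u i + f g i = f g i + f u i
    have h : f (u + g) = f (g + u) := by rw [hsym]
    rw [hadd, hadd] at h
    exact congrFun h i
  have fvv : ∀ i : ι, f v i + f v i = f u i := by
    intro i
    have h : f (v + v) = f u := by rw [hv]
    rw [hadd] at h
    exact congrFun h i
  have Cv : ∀ g : G, AddCommute v g := by
    intro g
    have h : f (v + g) = f (g + v) := by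
      rw [hadd, hadd]
      funext i
      show f v i + f g i = f g i + f v i
      set w := f v i with hw
      set ℓ := f g i with hℓ
      have key : (-ℓ + (w + ℓ)) + (-ℓ + (w + ℓ)) = w + w := by
        have e1 : (-ℓ + (w + ℓ)) + (-ℓ + (w + ℓ)) = -ℓ + ((w + w) + ℓ) := by
          simp [add_assoc]
        rw [e1, fvv i, fuc i ℓ, neg_add_cancel_left]
      have h2 : -ℓ + (w + ℓ) = w := dbl_lin i _ _ key
      have h3 : ℓ + (-ℓ + (w + ℓ)) = ℓ + w := by rw [h2]
      rw [add_neg_cancel_left] at h3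
      exact h3
    exact hinj h
  have cnu : ∀ g : G, g + -u = -u + g := fun g => ((Cu g).neg_left.eq).symm
  -- square rewriting: g - u + g = g + g - u
  have squ : ∀ g : G, g - u + g = g + g - u := by
    intro g
    rw [sub_eq_add_neg, sub_eq_add_neg, cnu g, add_assoc, ← cnu (g + g), add_assoc]
  -- v ≥ 0, v ≤ u
  have hv0 : 0 ≤ v := by
    apply dbl_le
    rw [add_zero, hv]
    exact hu0
  have hvu : v ≤ u := by
    rw [← hv]
    exact le_add_of_nonneg_left hv0
  have hsqv : (v - u + v) ⊔ 0 = 0 := by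
    have h : v - u + v = 0 := by
      rw [← hv]; simp [sub_eq_add_neg, neg_add_rev, ← add_assoc]
    rw [h, sup_idem]
  have hx0 : 0 ≤ x := ha.2.1 ▸ le_sup_right
  have hy0 : 0 ≤ y := hb.2.1 ▸ le_sup_right
  have hva : v ≤ a := ha.2.2 v hv0 hvu (by rw [hsqv]; exact hx0)
  have hvb : v ≤ b := hb.2.2 v hv0 hvu (by rw [hsqv]; exact hy0)
  -- key: √x + √x = x + u
  have sq_eq : ∀ p w : G, IsPMVSqrt u p w → v ≤ w → w + w = p + u := by
    intro p w hw hvw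
    have h2 : u ≤ w + w := by
      rw [← hv]; exact add_le_add hvw hvw
    have h3 : (0:G) ≤ w + w - u := sub_nonneg.mpr h2
    have h4 : p = w + w - u := by
      rw [← hw.2.1, squ w, sup_eq_left.mpr h3]
    rw [h4, sub_add_cancel]
  have sqA : a + a = x + u := sq_eq x a ha hva
  have sqB : b + b = y + u := sq_eq y b hb hvb
  -- c = v
  have hcv : c = v := by
    have h1 : v ≤ c := hc.2.2 v hv0 hvu (by rw [hsqv])
    have h2 : c ≤ v := by
      have h3 : c - u + c ≤ (0:G) := hc.2.1 ▸ le_sup_left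
      rw [squ c] at h3
      have h4 : c + c ≤ u := sub_nonpos.mp h3
      apply dbl_le
      rw [hv]
      exact h4
    exact le_antisymm h2 h1
  -- constructor lemma
  have mk : ∀ t w : G, 0 ≤ t → 0 ≤ w → w ≤ u → w + w = t + u → IsPMVSqrt u t w := by
    intro t w ht hw0 hwu hww
    refine ⟨⟨hw0, hwu⟩, ?_, ?_⟩
    · rw [squ w, hww, add_sub_cancel_right, sup_eq_left.mpr ht]
    · intro z hz0 hzu hsq
      have h1 : z - u + z ≤ t := le_trans le_sup_left hsq
      rw [squ z] at h1
      have h2 : z + z ≤ t + u := sub_le_iff_le_add.mp h1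
      rw [← hww] at h2
      exact dbl_le z w h2
  -- pointwise versions of sqA, sqB
  have sqAi : ∀ i, f a i + f a i = f x i + f u i := by
    intro i
    have h : f (a + a) = f (x + u) := by rw [sqA]
    rw [hadd, hadd] at h
    exact congrFun h i
  have sqBi : ∀ i, f b i + f b i = f y i + f u i := by
    intro i
    have h : f (b + b) = f (y + u) := by rw [sqB]
    rw [hadd, hadd] at h
    exact congrFun h i
  -- f preserves inf
  have finf : ∀ p q : G, f (p ⊓ q) = f p ⊓ f q := by
    intro p q
    have h : p ⊓ q = -(-p ⊔ -q) := by rw [neg_sup, neg_neg, neg_neg]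
    rw [h, fneg, hsup, fneg, fneg]
    funext i
    show (-(-f p ⊔ -f q)) i = (f p ⊓ f q) i
    show -((-f p ⊔ -f q) i) = f p i ⊓ f q i
    show -((-f p) i ⊔ (-f q) i) = f p i ⊓ f q i
    show -(-(f p i) ⊔ -(f q i)) = f p i ⊓ f q i
    rw [neg_sup, neg_neg, neg_neg]
  -- doubling of sup
  have hsd : (a ⊔ b) + (a ⊔ b) = (x ⊔ y) + u := by
    apply hinj
    rw [hadd, hsup, hadd, hsup]
    funext i
    show (f a ⊔ f b) i + (f a ⊔ f b) i = (f x ⊔ f y) i + f u i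
    show (f a i ⊔ f b i) + (f a i ⊔ f b i) = (f x i ⊔ f y i) + f u i
    rcases le_total (f a i) (f b i) with h | h
    · have hxy : f x i ≤ f y i := by
        have : f x i + f u i ≤ f y i + f u i := by
          rw [← sqAi i, ← sqBi i]; exact add_le_add h h
        exact le_of_add_le_add_right this
      rw [sup_eq_right.mpr h, sup_eq_right.mpr hxy, sqBi i]
    · have hxy : f y i ≤ f x i := by
        have : f y i + f u i ≤ f x i + f u i := by
          rw [← sqAi i, ← sqBi i]; exact add_le_add h h
        exact le_of_add_le_add_right this
      rw [sup_eq_left.mpr h, sup_eq_left.mpr hxy, sqAi i]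
  -- doubling of inf
  have hid : (a ⊓ b) + (a ⊓ b) = (x ⊓ y) + u := by
    apply hinj
    rw [hadd, finf, hadd, finf]
    funext i
    show (f a ⊓ f b) i + (f a ⊓ f b) i = (f x ⊓ f y) i + f u i
    show (f a i ⊓ f b i) + (f a i ⊓ f b i) = (f x i ⊓ f y i) + f u i
    rcases le_total (f a i) (f b i) with h | h
    · have hxy : f x i ≤ f y i := by
        have : f x i + f u i ≤ f y i + f u i := by
          rw [← sqAi i, ← sqBi i]; exact add_le_add h h
        exact le_of_add_le_add_right this
      rw [inf_eq_left.mpr h, inf_eq_left.mpr hxy, sqAi i]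
    · have hxy : f y i ≤ f x i := by
        have : f y i + f u i ≤ f x i + f u i := by
          rw [← sqAi i, ← sqBi i]; exact add_le_add h h
        exact le_of_add_le_add_right this
      rw [inf_eq_right.mpr h, inf_eq_right.mpr hxy, sqBi i]
  refine ⟨?_, ?_, ?_⟩
  · exact mk (x ⊔ y) (a ⊔ b) (le_trans hx0 le_sup_left)
      (le_trans ha.1.1 le_sup_left) (sup_le ha.1.2 hb.1.2) hsd
  · exact mk (x ⊓ y) (a ⊓ b) (le_inf hx0 hy0)
      (le_inf ha.1.1 hb.1.1) (le_trans inf_le_left ha.1.2) hid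
  · rw [hcv]
    have hwle : u - a + v ≤ u := by
      calc u - a + v ≤ u - a + a := add_le_add_right hva _
      _ = u := sub_add_cancel u a
    rw [inf_eq_left.mpr hwle]
    apply mk (u - x) (u - a + v) (sub_nonneg.mpr hx.2)
      (add_nonneg (sub_nonneg.mpr ha.1.2) hv0) hwle
    -- (u - a + v) + (u - a + v) = (u - x) + u
    have step1 : (u - a) + (u - a) = u - x := by
      have e1 : (u - a) + (u - a) = u + (-a + u) + -a := by
        rw [sub_eq_add_neg]
        simp [add_assoc]
      rw [e1]
      have e2' : -a + u = u + -a := ((Cu (-a)).eq).symm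
      rw [e2']
      have e3 : u + (u + -a) + -a = u + u + (-a + -a) := by
        simp [add_assoc]
      rw [e3]
      have e4 : -a + -a = -(a + a) := (neg_add_rev a a).symm
      rw [e4, sqA, neg_add_rev]
      rw [← add_assoc, add_assoc (u) (u) (-u), add_neg_cancel, add_zero,
        ← sub_eq_add_neg]
    calc (u - a + v) + (u - a + v)
        = (u - a) + (v + (u - a) + v) := by rw [add_assoc, add_assoc]
      _ = (u - a) + ((u - a) + v + v) := by rw [(Cv (u - a)).eq, add_assoc]
      _ = ((u - a) + (u - a)) + (v + v) := by rw [add_assoc, add_assoc]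
      _ = (u - x) + u := by rw [step1, hv]
end

section
/- Let M be a pseudo MV-algebra in which √0 exists. Then for every Boolean element b ∈ B(M), the square root √b exists and √b = b ∨ √0. Consequently, if √0 = 0 and √x exists for some x ∈ M, then x is Boolean. -/
/-- `a` is a square root of `x` in the pseudo MV-algebra `M`. -/
def IsSqrtElem {M : Type} [PMV M] (x a : M) : Prop :=
  PMV.mul a a = x ∧ ∀ y : M, PMV.le (PMV.mul y y) x → PMV.le y a

namespace PMVAux
open PMV

variable {M : Type} [PMV M]

lemma mul_def (x y : M) : mul x y = rneg (lneg y + lneg x) := rfl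

lemma lneg_zero : lneg (0:M) = 1 := by
  have h := a8b (1:M); rwa [rneg_one] at h

lemma rneg_zero : rneg (0:M) = 1 := by
  have h := a8a (1:M); rwa [lneg_one] at h

lemma rneg_eq_zero {w : M} (h : rneg w = 0) : w = 1 := by
  have h2 := a8b w; rw [h, lneg_zero] at h2; exact h2.symm

lemma mul_one (x : M) : mul x 1 = x := by
  rw [mul_def, lneg_one, zero_add', a8a]

lemma one_mul (x : M) : mul 1 x = x := by
  rw [mul_def, lneg_one, add_zero', a8a]

lemma mul_zero (x : M) : mul x 0 = 0 := by
  rw [mul_def, lneg_zero, one_add', rneg_one]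

lemma zero_mul (x : M) : mul 0 x = 0 := by
  rw [mul_def, lneg_zero, add_one', rneg_one]

lemma mul_assoc (x y z : M) : mul (mul x y) z = mul x (mul y z) := by
  show rneg (lneg z + lneg (mul x y)) = rneg (lneg (mul y z) + lneg x)
  rw [mul_def, mul_def, a8b, a8b, add_assoc']

lemma dm1 (x y : M) : lneg (mul x y) = lneg y + lneg x := a8b _

lemma mul_eq_lneg (x y : M) : mul x y = lneg (rneg y + rneg x) := by
  rw [mul_def, a5]

lemma dm2 (x y : M) : rneg (mul x y) = rneg y + rneg x := by
  rw [mul_eq_lneg, a8a]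

lemma dm3 (x y : M) : lneg (x + y) = mul (lneg y) (lneg x) := by
  rw [mul_def, a5, a8a, a8a]

lemma dm4 (x y : M) : rneg (x + y) = mul (rneg y) (rneg x) := by
  rw [mul_def, a8b, a8b]

lemma add_rneg (x : M) : x + rneg x = 1 := by
  have h := a6b x 1
  rw [lneg_one, zero_add', a8a, add_one'] at h
  exact h

lemma lneg_add (x : M) : lneg x + x = 1 := by
  have h := add_rneg (lneg x); rwa [a8a] at h

lemma mul_lneg_self (x : M) : mul x (lneg x) = 0 := by
  rw [mul_def, lneg_add, rneg_one]

lemma rneg_mul_self (x : M) : mul (rneg x) x = 0 := by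
  rw [mul_def, a8b, lneg_add, rneg_one]

lemma le_iff_r {x y : M} : le x y ↔ mul (rneg y) x = 0 := by
  have hm : mul (rneg y) x = rneg (lneg x + y) := by rw [mul_def, a8b]
  rw [hm]
  constructor
  · intro h; rw [show lneg x + y = 1 from h, rneg_one]
  · intro h; exact rneg_eq_zero h

lemma sup_def (x y : M) : sup x y = x + mul (rneg x) y := rfl

lemma sup_comm (x y : M) : sup x y = sup y x := a6a x y

lemma sup_eq_b (x y : M) : sup x y = mul y (lneg x) + x := a6c x y

lemma sup_eq_c (x y : M) : sup x y = mul x (lneg y) + y := a6b x y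

lemma le_add_right (x c : M) : le x (x + c) := by
  show lneg x + (x + c) = 1
  rw [← add_assoc', lneg_add, one_add']

lemma le_sup_left (x y : M) : le x (sup x y) := le_add_right x _

lemma le_sup_right (x y : M) : le y (sup x y) := by
  rw [sup_comm]; exact le_add_right y _

lemma sup_eq_of_le {x y : M} (h : le x y) : sup y x = y := by
  rw [sup_def, le_iff_r.mp h, add_zero']

lemma sup_eq_of_le' {x y : M} (h : le x y) : sup x y = y := by
  rw [sup_comm]; exact sup_eq_of_le h

lemma eq_add_of_le {x y : M} (h : le x y) : y = x + mul (rneg x) y :=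
  (sup_eq_of_le' h).symm

lemma eq_add_of_le' {x y : M} (h : le x y) : y = mul y (lneg x) + x := by
  have hb := sup_eq_b x y
  rw [sup_eq_of_le' h] at hb
  exact hb

lemma le_of_eq_add {x y c : M} (h : y = x + c) : le x y := by
  rw [h]; exact le_add_right x c

lemma le_of_mul_lneg {x y : M} (h : mul x (lneg y) = 0) : le x y := by
  have hs := sup_eq_c x y
  rw [h, zero_add'] at hs
  rw [← hs]; exact le_sup_left x y

lemma le_add_left (x c : M) : le x (c + x) := by
  apply le_of_mul_lneg
  rw [dm3, ← mul_assoc, mul_lneg_self, zero_mul]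

lemma le_of_eq_add' {x y c : M} (h : y = c + x) : le x y := by
  rw [h]; exact le_add_left x c

lemma mul_lneg_eq_zero_of_le {x y : M} (h : le x y) : mul x (lneg y) = 0 := by
  have h2 := eq_add_of_le' h
  rw [h2, dm3, ← mul_assoc, mul_lneg_self, zero_mul]

lemma le_refl (x : M) : le x x := lneg_add x

lemma le_trans {x y z : M} (h1 : le x y) (h2 : le y z) : le x z := by
  have e1 := eq_add_of_le h1
  have e2 := eq_add_of_le h2
  rw [e1, add_assoc'] at e2
  exact le_of_eq_add e2

lemma le_antisymm {x y : M} (h1 : le x y) (h2 : le y x) : x = y := by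
  have h3 := sup_eq_of_le' h1
  rw [sup_comm, sup_eq_of_le' h2] at h3
  exact h3

lemma mul_le_right (p q : M) : le (mul p q) q :=
  le_of_mul_lneg (by rw [mul_assoc, mul_lneg_self, mul_zero])

lemma mul_le_left (p q : M) : le (mul p q) p := by
  rw [le_iff_r, ← mul_assoc, rneg_mul_self, zero_mul]

lemma add_le_add_left {y z : M} (h : le y z) (x : M) : le (x + y) (x + z) := by
  have e := eq_add_of_le h
  have e2 : x + z = (x + y) + mul (rneg y) z := by
    rw [add_assoc', ← e]
  exact le_of_eq_add e2

lemma add_le_add_right {y z : M} (h : le y z) (x : M) : le (y + x) (z + x) := by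
  have e := eq_add_of_le' h
  have e2 : z + x = mul z (lneg y) + (y + x) := by
    rw [← add_assoc', ← e]
  exact le_of_eq_add' e2

lemma add_le_add {a b c d : M} (h1 : le a b) (h2 : le c d) : le (a + c) (b + d) :=
  le_trans (add_le_add_right h1 c) (add_le_add_left h2 b)

lemma lneg_le_lneg {x y : M} (h : le x y) : le (lneg y) (lneg x) := by
  rw [eq_add_of_le h, dm3]
  exact mul_le_right _ _

lemma rneg_le_rneg {x y : M} (h : le x y) : le (rneg y) (rneg x) := by
  rw [eq_add_of_le' h, dm4]
  exact mul_le_left _ _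

lemma mul_le_mul {a b c d : M} (h1 : le a b) (h2 : le c d) : le (mul a c) (mul b d) := by
  have h3 : le (lneg d + lneg b) (lneg c + lneg a) :=
    add_le_add (lneg_le_lneg h2) (lneg_le_lneg h1)
  exact rneg_le_rneg h3

lemma zero_le (x : M) : le 0 x := by
  show lneg 0 + x = 1
  rw [lneg_zero, one_add']

lemma le_zero_eq {x : M} (h : le x 0) : x = 0 := le_antisymm h (zero_le x)

lemma inf_def (x y : M) : inf x y = mul x (lneg x + y) := rfl

lemma inf_eq_b (x y : M) : inf x y = mul (x + rneg y) y := a7 x y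

lemma inf_le_left (x y : M) : le (inf x y) x := mul_le_left x _

lemma inf_le_right (x y : M) : le (inf x y) y := by
  rw [inf_eq_b]; exact mul_le_right _ _

lemma inf_eq_of_le {x y : M} (h : le x y) : inf x y = x := by
  rw [inf_def, show lneg x + y = 1 from h, mul_one]

lemma le_inf {c x y : M} (h1 : le c x) (h2 : le c y) : le c (inf x y) := by
  have h3 : le (inf c y) (inf x y) := by
    rw [inf_eq_b, inf_eq_b]
    exact mul_le_mul (add_le_add_right h1 (rneg y)) (le_refl y)
  rw [inf_eq_of_le h2] at h3
  exact h3

lemma inf_le_inf {a b c d : M} (h1 : le a b) (h2 : le c d) : le (inf a c) (inf b d) :=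
  le_inf (le_trans (inf_le_left a c) h1) (le_trans (inf_le_right a c) h2)

lemma inf_comm (x y : M) : inf x y = inf y x :=
  le_antisymm (le_inf (inf_le_right x y) (inf_le_left x y))
    (le_inf (inf_le_right y x) (inf_le_left y x))

lemma sup_le {x y c : M} (h1 : le x c) (h2 : le y c) : le (sup x y) c := by
  have h3 : le (sup x y) (sup x c) := by
    have h4 := add_le_add_left (mul_le_mul (le_refl (rneg x)) h2) x
    exact h4
  rw [sup_eq_of_le' h1] at h3
  exact h3

lemma mul_le_iff_r {x y w : M} : le (mul x y) w ↔ le y (lneg x + w) := by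
  constructor
  · intro h
    have hs : lneg x + mul x y = sup (lneg x) y := by rw [sup_def, a8a]
    have h1 : le y (lneg x + mul x y) := by rw [hs]; exact le_sup_right _ _
    exact le_trans h1 (add_le_add_left h (lneg x))
  · intro h
    have h1 := mul_le_mul (le_refl x) h
    exact le_trans h1 (inf_le_right x w)

lemma mul_le_iff_l {x y w : M} : le (mul x y) w ↔ le x (w + rneg y) := by
  constructor
  · intro h
    have hs : mul x y + rneg y = sup (rneg y) x := by rw [sup_eq_b, a8b]
    have h1 : le x (mul x y + rneg y) := by rw [hs]; exact le_sup_right _ _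
    exact le_trans h1 (add_le_add_right h (rneg y))
  · intro h
    have h1 := mul_le_mul h (le_refl y)
    refine le_trans h1 ?_
    rw [← inf_eq_b]
    exact inf_le_left w y

lemma mul_sup_le {x u v w : M} (h1 : le (mul x u) w) (h2 : le (mul x v) w) :
    le (mul x (sup u v)) w :=
  mul_le_iff_r.mpr (sup_le (mul_le_iff_r.mp h1) (mul_le_iff_r.mp h2))

lemma sup_mul_le {y u v w : M} (h1 : le (mul u y) w) (h2 : le (mul v y) w) :
    le (mul (sup u v) y) w :=
  mul_le_iff_l.mpr (sup_le (mul_le_iff_l.mp h1) (mul_le_iff_l.mp h2))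

lemma inf_lneg_self {b : M} (hb : b + b = b) : inf b (lneg b) = 0 := by
  rw [inf_eq_b, a8a, hb, mul_lneg_self]

lemma inf_rneg_self {b : M} (hb : b + b = b) : inf (rneg b) b = 0 := by
  rw [inf_def, a8b, hb, rneg_mul_self]

lemma bool_mul_self {b : M} (hb : b + b = b) : mul b b = b :=
  le_antisymm (mul_le_right b b) (le_of_mul_lneg (by
    rw [dm1]
    exact inf_lneg_self hb))

lemma bool_lneg {b : M} (hb : b + b = b) : lneg b + lneg b = lneg b := by
  rw [← dm1, bool_mul_self hb]

lemma bool_rneg {b : M} (hb : b + b = b) : rneg b + rneg b = rneg b := by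
  rw [← dm2, bool_mul_self hb]

lemma bool_mul_left {b : M} (hb : b + b = b) (x : M) : mul b x = inf b x := by
  apply le_antisymm
  · exact le_inf (mul_le_left b x) (mul_le_right b x)
  · apply le_of_mul_lneg
    rw [dm1]
    have h1 : le (mul (inf b x) (lneg x + lneg b)) (mul (inf b x) (lneg (inf b x) + lneg b)) :=
      mul_le_mul (le_refl _) (add_le_add_right (lneg_le_lneg (inf_le_right b x)) (lneg b))
    have h2 : le (mul (inf b x) (lneg (inf b x) + lneg b)) (inf b (lneg b)) := by
      have h3 : le (inf (inf b x) (lneg b)) (inf b (lneg b)) :=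
        inf_le_inf (inf_le_left b x) (le_refl (lneg b))
      exact h3
    have h4 := le_trans h1 h2
    rw [inf_lneg_self hb] at h4
    exact le_zero_eq h4

lemma bool_mul_right {b : M} (hb : b + b = b) (x : M) : mul x b = inf x b := by
  apply le_antisymm
  · exact le_inf (mul_le_left x b) (mul_le_right x b)
  · rw [le_iff_r, dm2]
    have h1 : le (mul (rneg b + rneg x) (inf x b)) (mul (rneg b + rneg (inf x b)) (inf x b)) :=
      mul_le_mul (add_le_add_left (rneg_le_rneg (inf_le_left x b)) (rneg b)) (le_refl _)
    have h2 : le (mul (rneg b + rneg (inf x b)) (inf x b)) (inf (rneg b) b) := by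
      have h3 : le (inf (rneg b) (inf x b)) (inf (rneg b) b) :=
        inf_le_inf (le_refl (rneg b)) (inf_le_right x b)
      rw [inf_eq_b (rneg b) (inf x b)] at h3
      exact h3
    have h4 := le_trans h1 h2
    rw [inf_rneg_self hb] at h4
    exact le_zero_eq h4

lemma lneg_sup (u v : M) : lneg (sup u v) = inf (lneg u) (lneg v) := by
  apply le_antisymm
  · exact le_inf (lneg_le_lneg (le_sup_left u v)) (lneg_le_lneg (le_sup_right u v))
  · have hu : le u (rneg (inf (lneg u) (lneg v))) := by
      have h := rneg_le_rneg (inf_le_left (lneg u) (lneg v))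
      rwa [a8a] at h
    have hv : le v (rneg (inf (lneg u) (lneg v))) := by
      have h := rneg_le_rneg (inf_le_right (lneg u) (lneg v))
      rwa [a8a] at h
    have hs := lneg_le_lneg (sup_le hu hv)
    rwa [a8b] at hs

lemma rneg_sup (u v : M) : rneg (sup u v) = inf (rneg u) (rneg v) := by
  apply le_antisymm
  · exact le_inf (rneg_le_rneg (le_sup_left u v)) (rneg_le_rneg (le_sup_right u v))
  · have hu : le u (lneg (inf (rneg u) (rneg v))) := by
      have h := lneg_le_lneg (inf_le_left (rneg u) (rneg v))
      rwa [a8b] at h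
    have hv : le v (lneg (inf (rneg u) (rneg v))) := by
      have h := lneg_le_lneg (inf_le_right (rneg u) (rneg v))
      rwa [a8b] at h
    have hs := rneg_le_rneg (sup_le hu hv)
    rwa [a8a] at hs

lemma bool_add_eq_sup {b : M} (hb : b + b = b) (x : M) : b + x = sup b x := by
  have h1 : lneg (b + x) = lneg (sup b x) := by
    rw [dm3, lneg_sup, bool_mul_right (bool_lneg hb) (lneg x)]
    exact inf_comm _ _
  have h2 := congrArg rneg h1
  rwa [a8a, a8a] at h2

lemma bool_add_eq_sup' {b : M} (hb : b + b = b) (x : M) : x + b = sup x b := by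
  have h1 : rneg (x + b) = rneg (sup x b) := by
    rw [dm4, rneg_sup, bool_mul_left (bool_rneg hb) (rneg x)]
    exact inf_comm _ _
  have h2 := congrArg lneg h1
  rwa [a8b, a8b] at h2

end PMVAux

/-- Let `M` be a pseudo MV-algebra in which `√0` exists.  Then for every Boolean
(idempotent) element `b`, `√b` exists and `√b = b ∨ √0`.  Consequently, if `√0 = 0`
and `√x` exists for some `x`, then `x` is Boolean. -/
theorem sqrt_of_boolean {M : Type} [PMV M] (z : M) (hz : IsSqrtElem (0 : M) z) :
    (∀ b : M, b + b = b → IsSqrtElem b (PMV.sup b z)) ∧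
    (z = 0 → ∀ x a : M, IsSqrtElem x a → x + x = x) := by
  obtain ⟨hz1, hz2⟩ := hz
  constructor
  · intro b hb
    refine ⟨?_, ?_⟩
    · -- mul (sup b z) (sup b z) = b
      apply PMVAux.le_antisymm
      · apply PMVAux.sup_mul_le
        · exact PMVAux.mul_le_left b (PMV.sup b z)
        · apply PMVAux.mul_sup_le
          · exact PMVAux.mul_le_right z b
          · rw [hz1]; exact PMVAux.zero_le b
      · have h := PMVAux.mul_le_mul (PMVAux.le_sup_left b z) (PMVAux.le_sup_left b z)
        rwa [PMVAux.bool_mul_self hb] at h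
    · intro y hy
      have hbl := PMVAux.bool_lneg hb
      have hw1 : PMV.mul y (PMV.lneg b) = PMV.inf y (PMV.lneg b) :=
        PMVAux.bool_mul_right hbl y
      have hw2 : PMV.mul (PMV.lneg b) y = PMV.inf y (PMV.lneg b) := by
        rw [PMVAux.bool_mul_left hbl y, PMVAux.inf_comm]
      have hsq : PMV.mul (PMV.inf y (PMV.lneg b)) (PMV.inf y (PMV.lneg b)) = 0 := by
        have e1 : PMV.mul (PMV.inf y (PMV.lneg b)) (PMV.inf y (PMV.lneg b))
            = PMV.mul (PMV.mul y y) (PMV.lneg b) := by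
          calc PMV.mul (PMV.inf y (PMV.lneg b)) (PMV.inf y (PMV.lneg b))
              = PMV.mul (PMV.mul y (PMV.lneg b)) (PMV.mul (PMV.lneg b) y) := by
                rw [hw1, hw2]
            _ = PMV.mul y (PMV.mul (PMV.lneg b) (PMV.mul (PMV.lneg b) y)) := by
                rw [PMVAux.mul_assoc]
            _ = PMV.mul y (PMV.mul (PMV.mul (PMV.lneg b) (PMV.lneg b)) y) := by
                rw [PMVAux.mul_assoc]
            _ = PMV.mul y (PMV.mul (PMV.lneg b) y) := by
                rw [PMVAux.bool_mul_self hbl]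
            _ = PMV.mul y (PMV.mul y (PMV.lneg b)) := by
                rw [hw2, hw1]
            _ = PMV.mul (PMV.mul y y) (PMV.lneg b) := by
                rw [PMVAux.mul_assoc]
        have h2 := PMVAux.mul_le_mul hy (PMVAux.le_refl (PMV.lneg b))
        rw [PMVAux.mul_lneg_self] at h2
        rw [e1]
        exact PMVAux.le_zero_eq h2
      have hwz : PMV.le (PMV.inf y (PMV.lneg b)) z :=
        hz2 _ (by rw [hsq]; exact PMVAux.le_refl 0)
      have hdec : PMV.le y (PMV.inf y (PMV.lneg b) + PMV.mul b y) := by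
        have h3 := PMVAux.sup_eq_b (PMV.mul b y) y
        rw [PMVAux.dm1] at h3
        have h4 := PMVAux.le_sup_right (PMV.mul b y) y
        rw [h3] at h4
        exact h4
      have h5 : PMV.le (PMV.inf y (PMV.lneg b) + PMV.mul b y) (z + b) :=
        PMVAux.add_le_add hwz (PMVAux.mul_le_left b y)
      have h6 : z + b = PMV.sup b z := by
        rw [PMVAux.bool_add_eq_sup' hb z, PMVAux.sup_comm]
      rw [h6] at h5
      exact PMVAux.le_trans hdec h5
  · intro hz0 x a _hx
    have hw : PMV.inf (PMV.rneg x) x = 0 := by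
      have h1 := PMVAux.mul_le_mul (PMVAux.inf_le_left (PMV.rneg x) x)
        (PMVAux.inf_le_right (PMV.rneg x) x)
      rw [PMVAux.rneg_mul_self] at h1
      have h2 := hz2 _ (by rw [PMVAux.le_zero_eq h1]; exact PMVAux.le_refl 0)
      rw [hz0] at h2
      exact PMVAux.le_zero_eq h2
    have h7 : PMV.le (x + x) x := by
      rw [PMVAux.le_iff_r]
      have h8 : PMV.mul (PMV.rneg x) (x + x) = PMV.inf (PMV.rneg x) x := by
        rw [PMVAux.inf_def, PMV.a8b]
      rw [h8, hw]
    exact PMVAux.le_antisymm h7 (PMVAux.le_add_right x x)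
end
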